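/- arXiv:2005.05500 — 4 statements merged into one kernel-verified Lean document; each statement's English description precedes it below -/
import Mathlib

section
/- For every positive integer m and every complex number z with |z| ≤ 1, the m-th cyclotomic polynomial satisfies log|Φ_m(z)| ≤ 2^{ω(m)} · log(π m), where ω(m) is the number of distinct prime divisors of m. -/
/-!
By the maximum modulus principle and continuity it suffices to bound `Φ_m` at points
`e(ν) = exp (2πiν)` of the unit circle that are not `m`-th roots of unity. There Möbius inversion
gives `Φ_m(z) = ∏_{μ(d) = 1} (z^{m/d} - 1) / ∏_{μ(d) = -1} (z^{m/d} - 1)`, with the same number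
`≤ 2^ω(m)` of factors above and below, and `|e(ν)^a - 1| = 2 |sin (π a ν)|`, which is comparable to
the distance `‖a ν‖` from `a ν` to the nearest integer. It is enough to pair the factors so that
each numerator factor is at most `π m` times its denominator partner.

If `‖a ν‖ ≥ 1/(2m)` for every `a = m/d` in the denominator, each denominator factor is at least
`2/m` and each numerator factor at most `2`. Otherwise some `a₀ ≤ m` has `‖a₀ ν‖ < 1/(2m)`, so `ν`
is within `1/(2m)` of a fraction `c/q` with `q ∣ a₀`. Then `‖a ν‖ ≥ 1/(2m)` whenever `a ≤ m` and
`q ∤ a`, while for the multiples `a ≤ m` of `q` the factor lies between `4 |ν - c/q|` and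
`2π m |ν - c/q|`. The divisors `d` with `q ∣ m/d` are the divisors of `m/q ≠ 1`, among which `μ`
again takes the values `1` and `-1` equally often, so the pairing can respect the two classes.
-/

open Polynomial Finset Real ArithmeticFunction
open scoped ArithmeticFunction.Moebius

theorem sum_moebius_divisors_eq_zero {n : ℕ} (hn : n ≠ 1) : ∑ d ∈ n.divisors, μ d = 0 := by
  rw [← coe_mul_zeta_apply, moebius_mul_coe_zeta, one_apply_ne hn]

theorem card_filter_moebius_eq_one_eq_neg_one {n : ℕ} (hn : n ≠ 1) :
    #{d ∈ n.divisors | μ d = 1} = #{d ∈ n.divisors | μ d = -1} := by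
  have h : ∑ d ∈ n.divisors, μ d =
      ∑ d ∈ n.divisors, ((if μ d = 1 then 1 else 0) - if μ d = -1 then 1 else 0) := by
    refine sum_congr rfl fun d _ => ?_
    rcases moebius_eq_or d with h | h | h <;> simp [h]
  rw [sum_moebius_divisors_eq_zero hn, sum_sub_distrib, sum_boole, sum_boole] at h
  exact_mod_cast (sub_eq_zero.mp h.symm)

theorem card_divisors_filter_squarefree {n : ℕ} (hn : n ≠ 0) :
    #{d ∈ n.divisors | Squarefree d} = 2 ^ #n.primeFactors := by
  rw [card_eq_sum_ones, Nat.sum_divisors_filter_squarefree hn, Nat.factors_eq, List.toFinset_coe,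
    Nat.toFinset_factors, sum_const, card_powerset, smul_eq_mul, mul_one]

theorem card_filter_moebius_eq_one_le_two_pow (n : ℕ) :
    #{d ∈ n.divisors | μ d = 1} ≤ 2 ^ #n.primeFactors := by
  rcases eq_or_ne n 0 with rfl | hn
  · simp
  rw [← card_divisors_filter_squarefree hn]
  exact card_le_card (monotone_filter_right _ fun d _ hd =>
    moebius_ne_zero_iff_squarefree.mp (by rw [hd]; exact one_ne_zero))

theorem Nat.filter_dvd_div_divisors {m q : ℕ} (hq : q ∣ m) :
    {d ∈ m.divisors | q ∣ m / d} = (m / q).divisors := by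
  rcases eq_or_ne m 0 with rfl | hm
  · simp
  ext d
  have hmq : m / q ≠ 0 := (Nat.div_ne_zero_iff_of_dvd hq).mpr ⟨hm, ne_zero_of_dvd_ne_zero hm hq⟩
  simp only [mem_filter, Nat.mem_divisors, hm, hmq, ne_eq, not_false_eq_true, and_true]
  constructor
  · rintro ⟨hd, h⟩
    rwa [Nat.dvd_div_iff_mul_dvd hq, mul_comm, ← Nat.dvd_div_iff_mul_dvd hd]
  · intro h
    have hd : d ∣ m := h.trans (Nat.div_dvd_of_dvd hq)
    rwa [Nat.dvd_div_iff_mul_dvd hd, mul_comm, ← Nat.dvd_div_iff_mul_dvd hq, and_iff_right hd]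

theorem card_filter_moebius_filter_dvd_div {m q : ℕ} (hqm : q ∣ m) (hq : q ≠ m) :
    #({d ∈ m.divisors | μ d = 1}.filter (q ∣ m / ·)) =
      #({d ∈ m.divisors | μ d = -1}.filter (q ∣ m / ·)) := by
  rw [filter_comm, filter_comm (p := fun d => μ d = -1), Nat.filter_dvd_div_divisors hqm]
  exact card_filter_moebius_eq_one_eq_neg_one fun h => hq (Nat.eq_of_dvd_of_div_eq_one hqm h)

theorem prod_zpow_moebius_eq_div {G : Type*} [DivisionCommMonoid G] (s : Finset ℕ) (g : ℕ → G) :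
    ∏ d ∈ s, g d ^ μ d = (∏ d ∈ s with μ d = 1, g d) / ∏ d ∈ s with μ d = -1, g d := by
  rw [prod_filter, prod_filter, ← prod_div_distrib]
  refine prod_congr rfl fun d _ => ?_
  rcases moebius_eq_or d with h | h | h <;> simp [h]

theorem Polynomial.cyclotomic_mul_prod_eq_prod_moebius (n : ℕ) (R : Type*) [CommRing R]
    [IsDomain R] :
    cyclotomic n R * ∏ d ∈ n.divisors with μ d = -1, (X ^ (n / d) - 1) =
      ∏ d ∈ n.divisors with μ d = 1, (X ^ (n / d) - 1 : R[X]) := by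
  apply IsFractionRing.injective R[X] (RatFunc R)
  have hne : ∀ d ∈ n.divisors, algebraMap R[X] (RatFunc R) (X ^ (n / d) - 1) ≠ 0 := by
    intro d hd
    rw [Ne, IsFractionRing.to_map_eq_zero_iff]
    exact (monic_X_pow_sub_C 1
      (Nat.div_pos (Nat.divisor_le hd) (Nat.pos_of_mem_divisors hd)).ne').ne_zero
  rw [map_mul, cyclotomic_eq_prod_X_pow_sub_one_pow_moebius, Nat.prod_divisorsAntidiagonal
    (fun d e => algebraMap R[X] (RatFunc R) (X ^ e - 1) ^ μ d), prod_zpow_moebius_eq_div,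
    map_prod, map_prod, div_mul_cancel₀]
  exact prod_ne_zero_iff.mpr fun d hd => hne d (mem_filter.mp hd).1

theorem norm_eval_cyclotomic_le_of_prod_le {m : ℕ} {z : ℂ} (hz : z ^ m ≠ 1) {K : ℝ}
    (h : ∏ d ∈ m.divisors with μ d = 1, ‖z ^ (m / d) - 1‖ ≤
      K ^ #{d ∈ m.divisors | μ d = 1} * ∏ d ∈ m.divisors with μ d = -1, ‖z ^ (m / d) - 1‖) :
    ‖(cyclotomic m ℂ).eval z‖ ≤ K ^ #{d ∈ m.divisors | μ d = 1} := by
  have hprod := congrArg (‖eval z ·‖) (cyclotomic_mul_prod_eq_prod_moebius m ℂ)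
  simp only [eval_mul, eval_prod, eval_sub, eval_pow, eval_X, eval_one, norm_mul,
    Complex.norm_prod] at hprod
  have hpos : 0 < ∏ d ∈ m.divisors with μ d = -1, ‖z ^ (m / d) - 1‖ := by
    refine prod_pos fun d hd => norm_pos_iff.mpr (sub_ne_zero.mpr fun h => hz ?_)
    rw [← Nat.div_mul_cancel (Nat.dvd_of_mem_divisors (mem_filter.mp hd).1), pow_mul, h, one_pow]
  rw [← hprod] at h
  exact le_of_mul_le_mul_right h hpos

theorem Finset.prod_le_pow_card_mul_prod {ι : Type*} {s t : Finset ι} {f : ι → ℝ} {K : ℝ}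
    (hK : 0 ≤ K) (hf : ∀ i, 0 ≤ f i) (hst : #s = #t) (h : ∀ x ∈ s, ∀ y ∈ t, f x ≤ K * f y) :
    ∏ x ∈ s, f x ≤ K ^ #s * ∏ y ∈ t, f y := by
  rcases t.eq_empty_or_nonempty with rfl | ht
  · simp [card_eq_zero.mp hst]
  obtain ⟨y₀, hy₀, hmin⟩ := t.exists_min_image f ht
  calc ∏ x ∈ s, f x ≤ ∏ _x ∈ s, K * f y₀ :=
        prod_le_prod (fun x _ => hf x) fun x hx => h x hx y₀ hy₀
    _ = K ^ #s * ∏ _y ∈ t, f y₀ := by rw [prod_const, prod_const, mul_pow, hst]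
    _ ≤ K ^ #s * ∏ y ∈ t, f y := by
        gcongr with y hy
        · exact fun _ _ => hf y₀
        · exact hmin y hy

theorem Finset.prod_le_pow_card_mul_prod_of_filter {ι : Type*} {s t : Finset ι} {f : ι → ℝ}
    {K : ℝ} (p : ι → Prop) [DecidablePred p] (hK : 0 ≤ K) (hf : ∀ i, 0 ≤ f i) (hst : #s = #t)
    (hp : #(s.filter p) = #(t.filter p))
    (h : ∀ x ∈ s, ∀ y ∈ t, (p x ↔ p y) → f x ≤ K * f y) :
    ∏ x ∈ s, f x ≤ K ^ #s * ∏ y ∈ t, f y := by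
  have hnp : #(s.filter (¬p ·)) = #(t.filter (¬p ·)) := by
    have := card_filter_add_card_filter_not (s := s) p
    have := card_filter_add_card_filter_not (s := t) p
    omega
  rw [← prod_filter_mul_prod_filter_not s p, ← prod_filter_mul_prod_filter_not t p,
    ← card_filter_add_card_filter_not (s := s) p, pow_add, mul_mul_mul_comm]
  refine mul_le_mul ?_ ?_ (prod_nonneg fun i _ => hf i)
    (mul_nonneg (pow_nonneg hK _) (prod_nonneg fun i _ => hf i))
  · refine prod_le_pow_card_mul_prod hK hf hp fun x hx y hy => h x ?_ y ?_ ?_ <;> simp_all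
  · refine prod_le_pow_card_mul_prod hK hf hnp fun x hx y hy => h x ?_ y ?_ ?_ <;> simp_all

theorem two_mul_abs_le_abs_sin_pi_mul {y : ℝ} (hy : |y| ≤ 1 / 2) : 2 * |y| ≤ |sin (π * y)| := by
  wlog h : 0 ≤ y generalizing y
  · simpa [abs_neg, mul_neg, sin_neg] using this (y := -y) (by rwa [abs_neg]) (by linarith)
  rw [abs_of_nonneg h] at hy ⊢
  calc 2 * y = 2 / π * (π * y) := by field_simp
    _ ≤ sin (π * y) := mul_le_sin (by positivity) (by nlinarith [pi_pos])
    _ ≤ |sin (π * y)| := le_abs_self _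

theorem abs_sin_pi_mul_le (y : ℝ) : |sin (π * y)| ≤ π * |y| := by
  simpa [abs_mul, abs_of_pos pi_pos] using abs_sin_le_abs (x := π * y)

theorem abs_sin_pi_mul_add_intCast (x : ℝ) (n : ℤ) : |sin (π * (x + n))| = |sin (π * x)| := by
  rw [mul_add, mul_comm π n, sin_add_int_mul_pi, abs_mul, abs_neg_one_zpow, one_mul]

theorem two_mul_abs_sub_round_le_abs_sin (x : ℝ) : 2 * |x - round x| ≤ |sin (π * x)| := by
  have h := abs_sin_pi_mul_add_intCast (x - round x) (round x)
  rw [sub_add_cancel] at h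
  rw [h]
  exact two_mul_abs_le_abs_sin_pi_mul (abs_sub_round x)

theorem norm_cexp_two_pi_I_pow_sub_one (ν : ℝ) (a : ℕ) :
    ‖Complex.exp (2 * π * ν * Complex.I) ^ a - 1‖ = 2 * |sin (π * (a * ν))| := by
  rw [← Complex.exp_nat_mul, show (a : ℂ) * (2 * π * ν * Complex.I) =
      Complex.I * ↑(2 * π * (a * ν)) by push_cast; ring,
    Complex.norm_exp_I_mul_ofReal_sub_one, norm_mul, Real.norm_two, Real.norm_eq_abs]
  ring_nf

theorem norm_cexp_two_pi_I_pow_sub_one_le_of_le_abs_sub_round {m b : ℕ} {ν : ℝ}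
    (hb : 1 ≤ 2 * m * |b * ν - round (b * ν)|) (a : ℕ) :
    ‖Complex.exp (2 * π * ν * Complex.I) ^ a - 1‖ ≤
      π * m * ‖Complex.exp (2 * π * ν * Complex.I) ^ b - 1‖ := by
  rw [norm_cexp_two_pi_I_pow_sub_one, norm_cexp_two_pi_I_pow_sub_one]
  have h₁ := two_mul_abs_sub_round_le_abs_sin (b * ν)
  have h₂ := abs_sin_le_one (π * (a * ν))
  have hπm : 0 ≤ π * m := by positivity
  nlinarith [mul_le_mul_of_nonneg_left h₁ hπm, mul_le_mul_of_nonneg_left hb pi_pos.le, pi_gt_three]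

theorem norm_cexp_two_pi_I_pow_sub_one_le_of_eq_intCast_add {m a b : ℕ} {ν δ : ℝ} {k l : ℤ}
    (ham : a ≤ m) (hb : 0 < b) (hbm : b ≤ m) (hδ : 2 * m * |δ| < 1)
    (hak : a * ν = k + a * δ) (hbl : b * ν = l + b * δ) :
    ‖Complex.exp (2 * π * ν * Complex.I) ^ a - 1‖ ≤
      π * m * ‖Complex.exp (2 * π * ν * Complex.I) ^ b - 1‖ := by
  rw [norm_cexp_two_pi_I_pow_sub_one, norm_cexp_two_pi_I_pow_sub_one, hak, hbl, add_comm,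
    abs_sin_pi_mul_add_intCast, add_comm, abs_sin_pi_mul_add_intCast]
  have ha' : (a : ℝ) ≤ m := by exact_mod_cast ham
  have hb' : (1 : ℝ) ≤ b ∧ (b : ℝ) ≤ m := ⟨by exact_mod_cast hb, by exact_mod_cast hbm⟩
  have hupper := abs_sin_pi_mul_le (a * δ)
  have hlower := two_mul_abs_le_abs_sin_pi_mul (y := b * δ)
    (by rw [abs_mul, Nat.abs_cast]; nlinarith [abs_nonneg δ])
  rw [abs_mul, Nat.abs_cast] at hupper hlower
  have hπδ : 0 ≤ π * |δ| := mul_nonneg pi_pos.le (abs_nonneg δ)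
  have hπm : 0 ≤ π * m := by positivity
  nlinarith [mul_le_mul_of_nonneg_left hlower hπm, mul_le_mul_of_nonneg_left ha' hπδ,
    mul_le_mul_of_nonneg_left hb'.1 (mul_nonneg hπm (abs_nonneg δ))]

theorem Rat.den_dvd_of_mul_eq_intCast {r : ℚ} {a n : ℤ} (h : a * r = n) : (r.den : ℤ) ∣ a := by
  have hnum : a * r.num = n * r.den := by
    have : (a * r.num : ℚ) = n * r.den := by rw [← Rat.mul_den_eq_num, ← mul_assoc, h]
    exact_mod_cast this
  have hcop : IsCoprime (r.den : ℤ) r.num :=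
    Int.isCoprime_iff_gcd_eq_one.mpr (by simpa [Int.gcd, Nat.coprime_comm] using r.reduced)
  exact hcop.dvd_of_dvd_mul_right ⟨n, by rw [hnum, mul_comm]⟩

theorem one_le_mul_add_abs_sub_round_of_ne {x : ℝ} {a b m : ℕ} (ha : a ≤ m) (hb : b ≤ m)
    (h : (b : ℤ) * round (a * x) ≠ a * round (b * x)) :
    1 ≤ m * (|a * x - round (a * x)| + |b * x - round (b * x)|) := by
  have ht : (1 : ℝ) ≤ |((b * round (a * x) - a * round (b * x) : ℤ) : ℝ)| := by
    exact_mod_cast Int.one_le_abs (sub_ne_zero.mpr h)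
  have hm : (a : ℝ) ≤ m ∧ (b : ℝ) ≤ m := ⟨by exact_mod_cast ha, by exact_mod_cast hb⟩
  calc (1 : ℝ) ≤ |a * (b * x - round (b * x)) - b * (a * x - round (a * x))| := by
        convert ht using 2; push_cast; ring
    _ ≤ a * |b * x - round (b * x)| + b * |a * x - round (a * x)| := by
        refine (abs_sub _ _).trans ?_
        rw [abs_mul, abs_mul, Nat.abs_cast, Nat.abs_cast]
    _ ≤ m * (|a * x - round (a * x)| + |b * x - round (b * x)|) := by
        nlinarith [abs_nonneg (a * x - round (a * x)), abs_nonneg (b * x - round (b * x))]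

/-- `q` is the denominator of `round (a₀ x) / a₀` and `δ` the error of this approximation of `x`. -/
theorem exists_dvd_of_two_mul_abs_sub_round_lt (x : ℝ) {m a₀ : ℕ} (ha₀ : 0 < a₀)
    (ha₀m : a₀ ≤ m) (hsmall : 2 * m * |a₀ * x - round (a₀ * x)| < 1) :
    ∃ q : ℕ, q ∣ a₀ ∧ ∃ δ : ℝ, 2 * m * |δ| < 1 ∧
      (∀ a : ℕ, q ∣ a → ∃ n : ℤ, a * x = n + a * δ) ∧
      (∀ a : ℕ, a ≤ m → ¬ q ∣ a → 1 ≤ 2 * m * |a * x - round (a * x)|) := by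
  set r : ℚ := round (a₀ * x) / a₀
  have ha₀r : ((a₀ : ℤ) : ℚ) * r = round (a₀ * x) := by
    push_cast
    exact mul_div_cancel₀ _ (by exact_mod_cast ha₀.ne')
  have hδ : a₀ * (x - r) = a₀ * x - round (a₀ * x) := by
    rw [mul_sub]; congr 1; exact_mod_cast ha₀r
  refine ⟨r.den, by exact_mod_cast Rat.den_dvd_of_mul_eq_intCast ha₀r, x - r, ?_, ?_, ?_⟩
  · have : |x - r| ≤ |a₀ * (x - r)| := by
      rw [abs_mul, Nat.abs_cast]
      exact le_mul_of_one_le_left (abs_nonneg _) (by exact_mod_cast ha₀)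
    rw [hδ] at this
    nlinarith [(Nat.cast_nonneg m : (0 : ℝ) ≤ m)]
  · rintro a ⟨b, rfl⟩
    refine ⟨b * r.num, ?_⟩
    have : (r.den : ℝ) * r = r.num := by exact_mod_cast Rat.den_mul_eq_num r
    push_cast
    linear_combination b * this
  · intro a ham hq
    by_contra! hlt
    have hne : (a₀ : ℤ) * round (a * x) ≠ a * round (a₀ * x) := by
      intro heq
      refine hq (Int.natCast_dvd_natCast.mp
        (Rat.den_dvd_of_mul_eq_intCast (n := round (a * x)) ?_))
      have hcast : ((a₀ * round (a * x) : ℤ) : ℚ) = (a * round (a₀ * x) : ℤ) := congrArg _ heq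
      push_cast at hcast ⊢
      rw [mul_div_assoc', ← hcast, mul_div_cancel_left₀ _ (by exact_mod_cast ha₀.ne')]
    have := one_le_mul_add_abs_sub_round_of_ne ham ha₀m hne
    linarith

theorem prod_norm_cexp_two_pi_I_pow_sub_one_le {m : ℕ} (hm : 1 < m) (ν : ℝ) :
    ∏ d ∈ m.divisors with μ d = 1, ‖Complex.exp (2 * π * ν * Complex.I) ^ (m / d) - 1‖ ≤
      (π * m) ^ #{d ∈ m.divisors | μ d = 1} *
        ∏ d ∈ m.divisors with μ d = -1, ‖Complex.exp (2 * π * ν * Complex.I) ^ (m / d) - 1‖ := by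
  set P := {d ∈ m.divisors | μ d = 1}
  set N := {d ∈ m.divisors | μ d = -1}
  have hdiv : ∀ d ∈ m.divisors, 0 < m / d ∧ m / d ≤ m := fun d hd =>
    ⟨Nat.div_pos (Nat.divisor_le hd) (Nat.pos_of_mem_divisors hd), Nat.div_le_self m d⟩
  have hcard : #P = #N := card_filter_moebius_eq_one_eq_neg_one hm.ne'
  have hK : 0 ≤ π * m := by positivity
  have hf : ∀ d, 0 ≤ ‖Complex.exp (2 * π * ν * Complex.I) ^ (m / d) - 1‖ := fun _ => norm_nonneg _
  by_cases hfar : ∀ d ∈ N, 1 ≤ 2 * m * |(m / d : ℕ) * ν - round ((m / d : ℕ) * ν)|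
  · exact prod_le_pow_card_mul_prod hK hf hcard fun x _ y hy =>
      norm_cexp_two_pi_I_pow_sub_one_le_of_le_abs_sub_round (hfar y hy) _
  push Not at hfar
  obtain ⟨d₀, hd₀, hsmall⟩ := hfar
  obtain ⟨hd₀m, hμd₀⟩ := mem_filter.mp hd₀
  obtain ⟨q, hqa₀, δ, hδ, hclass, hnotclass⟩ :=
    exists_dvd_of_two_mul_abs_sub_round_lt ν (hdiv d₀ hd₀m).1 (hdiv d₀ hd₀m).2 hsmall
  have hqm : q ∣ m := hqa₀.trans (Nat.div_dvd_of_dvd (Nat.dvd_of_mem_divisors hd₀m))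
  have hq : q ≠ m := by
    have hd₀ : 1 < d₀ := by
      refine lt_of_le_of_ne (Nat.pos_of_mem_divisors hd₀m) fun h => ?_
      simp [← h] at hμd₀
    exact ((Nat.le_of_dvd (hdiv d₀ hd₀m).1 hqa₀).trans_lt
      (Nat.div_lt_self (by omega) hd₀)).ne
  have hp := card_filter_moebius_filter_dvd_div hqm hq
  refine prod_le_pow_card_mul_prod_of_filter (q ∣ m / ·) hK hf hcard hp fun x hx y hy hxy => ?_
  have hx := hdiv x (mem_filter.mp hx).1
  have hy := hdiv y (mem_filter.mp hy).1
  by_cases hqy : q ∣ m / y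
  · obtain ⟨k, hk⟩ := hclass _ (hxy.mpr hqy)
    obtain ⟨l, hl⟩ := hclass _ hqy
    exact norm_cexp_two_pi_I_pow_sub_one_le_of_eq_intCast_add hx.2 hy.1 hy.2 hδ hk hl
  · exact norm_cexp_two_pi_I_pow_sub_one_le_of_le_abs_sub_round (hnotclass _ hy.2 hqy) _

theorem Polynomial.norm_eval_cexp_le_of_pow_ne_one (p : ℂ[X]) {m : ℕ} (hm : m ≠ 0) {C : ℝ}
    (h : ∀ ν : ℝ, Complex.exp (2 * π * ν * Complex.I) ^ m ≠ 1 →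
      ‖p.eval (Complex.exp (2 * π * ν * Complex.I))‖ ≤ C) (ν : ℝ) :
    ‖p.eval (Complex.exp (2 * π * ν * Complex.I))‖ ≤ C := by
  have hcont : Continuous fun ν : ℝ => ‖p.eval (Complex.exp (2 * π * ν * Complex.I))‖ := by
    fun_prop
  have hcount : {ν : ℝ | Complex.exp (2 * π * ν * Complex.I) ^ m = 1}.Countable := by
    refine (Set.countable_range fun n : ℤ => (n : ℝ) / m).mono fun ν hν => ?_
    obtain ⟨n, hn⟩ := Complex.exp_eq_one_iff.mp ((Complex.exp_nat_mul _ m).trans hν)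
    have hmν : ((m * ν : ℝ) : ℂ) = (n : ℝ) := by
      push_cast
      exact mul_right_cancel₀ Complex.two_pi_I_ne_zero (by linear_combination hn)
    refine ⟨n, div_eq_of_eq_mul (by exact_mod_cast hm) ?_⟩
    rw [mul_comm]
    exact_mod_cast hmν.symm
  exact (isClosed_le hcont continuous_const).closure_subset_iff.mpr (fun ν hν => h ν hν)
    ((hcount.dense_compl ℝ).closure_eq ▸ Set.mem_univ ν)

theorem Polynomial.norm_eval_le_of_forall_norm_eq_one (p : ℂ[X]) {C : ℝ}
    (h : ∀ w : ℂ, ‖w‖ = 1 → ‖p.eval w‖ ≤ C) {z : ℂ} (hz : ‖z‖ ≤ 1) : ‖p.eval z‖ ≤ C :=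
  Complex.norm_le_of_forall_mem_frontier_norm_le (U := Metric.ball 0 1) Metric.isBounded_ball
    p.differentiable.diffContOnCl (fun w hw => h w (by simpa [frontier_ball] using hw))
    (by simpa [closure_ball] using hz)

theorem exists_cexp_two_pi_I_eq {w : ℂ} (hw : ‖w‖ = 1) :
    ∃ ν : ℝ, Complex.exp (2 * π * ν * Complex.I) = w := by
  refine ⟨w.arg / (2 * π), ?_⟩
  convert Complex.norm_mul_exp_arg_mul_I w using 1
  rw [hw, Complex.ofReal_one, one_mul]
  congr 1
  push_cast
  field_simp

/-- For every positive integer `m` and every complex `z` with `|z| ≤ 1`, the `m`-th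
cyclotomic polynomial satisfies `|Φ_m(z)| ≤ (π m) ^ (2 ^ ω(m))`, i.e.
`log |Φ_m(z)| ≤ 2 ^ ω(m) · log (π m)` (with the convention `log 0 = -∞`). -/
theorem cyclotomic_abs_le (m : ℕ) (hm : 0 < m) (z : ℂ) (hz : ‖z‖ ≤ 1) :
    ‖(Polynomial.cyclotomic m ℂ).eval z‖ ≤
      (Real.pi * m) ^ (2 ^ m.primeFactors.card) := by
  obtain rfl | hm1 := (Nat.one_le_of_lt hm).eq_or_lt
  · simp only [cyclotomic_one, eval_sub, eval_X, eval_one, Nat.primeFactors_one, card_empty,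
      pow_zero, pow_one, Nat.cast_one, mul_one]
    linarith [norm_sub_le z 1, norm_one (α := ℂ), pi_gt_three]
  have hπm : 1 ≤ π * m := by nlinarith [pi_gt_three, (by exact_mod_cast hm : (1 : ℝ) ≤ m)]
  refine (cyclotomic m ℂ).norm_eval_le_of_forall_norm_eq_one (fun w hw => ?_) hz
  obtain ⟨ν, rfl⟩ := exists_cexp_two_pi_I_eq hw
  refine (cyclotomic m ℂ).norm_eval_cexp_le_of_pow_ne_one (m := m) (by omega) (fun ν hν => ?_) ν
  calc _ ≤ (π * m) ^ #{d ∈ m.divisors | μ d = 1} :=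
        norm_eval_cyclotomic_le_of_prod_le hν (prod_norm_cexp_two_pi_I_pow_sub_one_le hm1 ν)
    _ ≤ (π * m) ^ (2 ^ #m.primeFactors) :=
        pow_le_pow_right₀ hπm (card_filter_moebius_eq_one_le_two_pow m)
end

section
/- For every positive integer m and every complex number z, one has |log⁺|Φ_m(z)| - φ(m)·log⁺|z|| ≤ 2^{ω(m)} · log(π m), where log⁺ t = max(log t, 0). -/
/-! For `‖z‖ > 1`, Möbius inversion of `∏_{d ∣ m} Φ_d = X ^ m - 1` writes
`log ‖Φ_m(z)‖ - φ(m) log ‖z‖` as `∑_{ab = m} μ(a) (log ‖z ^ b - 1‖ - b log ‖z‖)`. Each bracket is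
at most `log (‖z‖ / (‖z‖ - 1))` in absolute value, and `2 ^ ω(m)` of the `μ(a)` are nonzero; for
`‖z‖ ≥ 1 + 1/m` this gives the bound with `log (m + 1)`. Inside that disc `φ(m) log⁺ ‖z‖ ≤ 1`, and
the maximum modulus principle bounds `‖Φ_m(z)‖` by its values on the circle `‖z‖ = 1 + 1/m`, where
the first estimate applies. -/

open Polynomial Real
open scoped ArithmeticFunction.Moebius

section NormedField

variable {K : Type*} [NormedField K]

lemma not_isOfFinOrder_of_one_lt_norm {w : K} (hw : 1 < ‖w‖) : ¬IsOfFinOrder w :=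
  fun h => hw.ne' h.norm_eq_one

lemma eval_cyclotomic_ne_zero_of_not_isOfFinOrder {z : K} (hz : ¬IsOfFinOrder z) {n : ℕ}
    (hn : 0 < n) : (cyclotomic n K).eval z ≠ 0 := by
  have h := eval_dvd (x := z) (cyclotomic.dvd_X_pow_sub_one n K)
  rw [eval_sub, eval_pow, eval_X, eval_one] at h
  exact ne_zero_of_dvd_ne_zero
    (sub_ne_zero.mpr fun h => hz (isOfFinOrder_iff_pow_eq_one.2 ⟨n, hn, h⟩)) h

lemma log_norm_eval_cyclotomic_eq_sum_moebius {z : K} (hz : ¬IsOfFinOrder z)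
    {m : ℕ} (hm : 0 < m) :
    log ‖(cyclotomic m K).eval z‖ =
      ∑ x ∈ m.divisorsAntidiagonal, (μ x.1 : ℝ) * log ‖z ^ x.2 - 1‖ := by
  refine (ArithmeticFunction.sum_eq_iff_sum_mul_moebius_eq (R := ℝ)
    (f := fun n => log ‖(cyclotomic n K).eval z‖) (g := fun n => log ‖z ^ n - 1‖)).mp
    (fun n hn => ?_) m hm |>.symm
  rw [← Real.log_prod fun d hd => norm_ne_zero_iff.mpr <|
      eval_cyclotomic_ne_zero_of_not_isOfFinOrder hz (Nat.pos_of_mem_divisors hd),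
    ← norm_prod, ← eval_prod, prod_cyclotomic_eq_X_pow_sub_one hn]
  simp

lemma totient_eq_sum_moebius_mul {R : Type*} [NonAssocRing R] {m : ℕ} (hm : 0 < m) :
    (m.totient : R) = ∑ x ∈ m.divisorsAntidiagonal, (μ x.1 : R) * x.2 :=
  (ArithmeticFunction.sum_eq_iff_sum_mul_moebius_eq (f := fun n => (n.totient : R))
    (g := fun n => (n : R))).mp (fun n _ => by rw [← Nat.cast_sum, Nat.sum_totient]) m hm |>.symm

lemma sum_abs_moebius_divisors {m : ℕ} (hm : m ≠ 0) :
    ∑ d ∈ m.divisors, |μ d| = 2 ^ m.primeFactors.card := by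
  simp_rw [ArithmeticFunction.abs_moebius, ← Finset.sum_filter,
    Nat.sum_divisors_filter_squarefree hm]
  simp [Nat.factors_eq]

lemma norm_pow_sub_one_bounds {w : K} (hw : 1 < ‖w‖) {b : ℕ} (hb : 0 < b) :
    ‖w‖ ^ b / (‖w‖ / (‖w‖ - 1)) ≤ ‖w ^ b - 1‖ ∧
      ‖w ^ b - 1‖ ≤ ‖w‖ ^ b * (‖w‖ / (‖w‖ - 1)) := by
  set r := ‖w‖
  have hr : r ≤ r ^ b := le_self_pow₀ hw.le hb.ne'
  have h1 : r ^ b - 1 ≤ ‖w ^ b - 1‖ := by simpa [r] using norm_sub_norm_le (w ^ b) 1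
  have h2 : ‖w ^ b - 1‖ ≤ r ^ b + 1 := by simpa [r] using norm_sub_le (w ^ b) 1
  constructor
  · rw [div_div_eq_mul_div, div_le_iff₀ (by linarith)]
    nlinarith
  · rw [mul_div_assoc', le_div_iff₀ (by linarith)]
    nlinarith

lemma abs_log_norm_pow_sub_one_sub_le {w : K} (hw : 1 < ‖w‖) {b : ℕ} (hb : 0 < b) :
    |log ‖w ^ b - 1‖ - b * log ‖w‖| ≤ log (‖w‖ / (‖w‖ - 1)) := by
  set r := ‖w‖
  have hc : 0 < r / (r - 1) := div_pos (by linarith) (by linarith)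
  have hrb : 0 < r ^ b := pow_pos (by linarith) b
  obtain ⟨hlo, hhi⟩ := norm_pow_sub_one_bounds hw hb
  have hlog_lo := Real.log_le_log (div_pos hrb hc) hlo
  have hlog_hi := Real.log_le_log ((div_pos hrb hc).trans_le hlo) hhi
  rw [Real.log_div hrb.ne' hc.ne', Real.log_pow] at hlog_lo
  rw [Real.log_mul hrb.ne' hc.ne', Real.log_pow] at hlog_hi
  rw [abs_sub_le_iff]
  constructor <;> linarith

theorem abs_log_norm_eval_cyclotomic_sub_le {w : K} (hw : 1 < ‖w‖) {m : ℕ} (hm : 0 < m) :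
    |log ‖(cyclotomic m K).eval w‖ - m.totient * log ‖w‖| ≤
      2 ^ m.primeFactors.card * log (‖w‖ / (‖w‖ - 1)) := by
  rw [log_norm_eval_cyclotomic_eq_sum_moebius (not_isOfFinOrder_of_one_lt_norm hw) hm,
    totient_eq_sum_moebius_mul hm, Finset.sum_mul, ← Finset.sum_sub_distrib]
  calc _ ≤ ∑ x ∈ m.divisorsAntidiagonal, |(μ x.1 : ℝ)| * log (‖w‖ / (‖w‖ - 1)) := by
        refine (Finset.abs_sum_le_sum_abs _ _).trans (Finset.sum_le_sum fun x hx => ?_)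
        rw [mul_assoc, ← mul_sub, abs_mul]
        exact mul_le_mul_of_nonneg_left (abs_log_norm_pow_sub_one_sub_le hw
          (Nat.pos_of_mem_divisors (Nat.snd_mem_divisors_of_mem_antidiagonal hx))) (abs_nonneg _)
    _ = 2 ^ m.primeFactors.card * log (‖w‖ / (‖w‖ - 1)) := by
        rw [← Finset.sum_mul, Nat.sum_divisorsAntidiagonal (fun a _ => |(μ a : ℝ)|)]
        exact_mod_cast congrArg (fun n : ℤ => (n : ℝ) * log (‖w‖ / (‖w‖ - 1)))
          (sum_abs_moebius_divisors hm.ne')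

lemma abs_log_norm_eval_cyclotomic_sub_le_of_one_add_inv_le {m : ℕ} (hm : 0 < m) {w : K}
    (hw : 1 + (m : ℝ)⁻¹ ≤ ‖w‖) :
    |log ‖(cyclotomic m K).eval w‖ - m.totient * log ‖w‖| ≤
      2 ^ m.primeFactors.card * log (m + 1) := by
  have hm' : (0 : ℝ) < m := by exact_mod_cast hm
  have hw1 : 1 < ‖w‖ := lt_of_lt_of_le (lt_add_of_pos_right 1 (inv_pos.mpr hm')) hw
  refine (abs_log_norm_eval_cyclotomic_sub_le hw1 hm).trans ?_
  gcongr
  rw [div_le_iff₀ (by linarith)]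
  have : (m : ℝ) * (m : ℝ)⁻¹ = 1 := mul_inv_cancel₀ hm'.ne'
  nlinarith

end NormedField

lemma Complex.norm_le_of_forall_mem_sphere_norm_le {F : Type*} [NormedAddCommGroup F]
    [NormedSpace ℂ F] {f : ℂ → F} (hf : Differentiable ℂ f) {R C : ℝ}
    (hC : ∀ w : ℂ, ‖w‖ = R → ‖f w‖ ≤ C) {z : ℂ} (hz : ‖z‖ < R) : ‖f z‖ ≤ C := by
  have hR : R ≠ 0 := ((norm_nonneg z).trans_lt hz).ne'
  refine Complex.norm_le_of_forall_mem_frontier_norm_le (U := Metric.ball 0 R)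
    Metric.isBounded_ball hf.diffContOnCl (fun w hw => hC w ?_)
    (subset_closure (mem_ball_zero_iff.mpr hz))
  rwa [frontier_ball 0 hR, mem_sphere_zero_iff_norm] at hw

lemma one_le_log_pi_mul {m : ℕ} (hm : 0 < m) : 1 ≤ log (π * m) := by
  have : (1 : ℝ) ≤ m := by exact_mod_cast hm
  rw [Real.le_log_iff_exp_le (by positivity)]
  nlinarith [Real.exp_one_lt_d9, Real.pi_gt_three]

lemma log_add_one_le_log_pi_mul {m : ℕ} (hm : 0 < m) : log (m + 1) ≤ log (π * m) := by
  have : (1 : ℝ) ≤ m := by exact_mod_cast hm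
  exact Real.log_le_log (by positivity) (by nlinarith [Real.pi_gt_three])

lemma one_add_mul_log_add_one_le {m : ℕ} (hm : 2 ≤ m) {k : ℝ} (hk : 2 ≤ k) :
    1 + k * log (m + 1) ≤ k * log (π * m) := by
  have hm' : (2 : ℝ) ≤ m := by exact_mod_cast hm
  have hinv : (π * m / (m + 1))⁻¹ ≤ 1 / 2 := by
    rw [inv_div, div_le_iff₀ (by positivity)]
    nlinarith [Real.pi_gt_three]
  have h := Real.one_sub_inv_le_log_of_pos (x := π * m / (m + 1)) (by positivity)
  rw [Real.log_div (by positivity) (by positivity)] at h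
  nlinarith

lemma totient_mul_log_one_add_inv_le_one (m : ℕ) : m.totient * log (1 + (m : ℝ)⁻¹) ≤ 1 :=
  calc m.totient * log (1 + (m : ℝ)⁻¹) ≤ m * (m : ℝ)⁻¹ := by
        gcongr
        · exact Real.log_nonneg (by simp)
        · exact_mod_cast Nat.totient_le m
        · linarith [Real.log_le_sub_one_of_pos (x := 1 + (m : ℝ)⁻¹) (by positivity)]
    _ ≤ 1 := mul_inv_le_one

lemma abs_posLog_sub_le_abs_log_sub (x : ℝ) {t : ℝ} (ht : 0 ≤ t) : |log⁺ x - t| ≤ |log x - t| := by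
  rw [Real.posLog_apply]
  rcases le_total 0 (log x) with h | h
  · rw [max_eq_right h]
  · rw [max_eq_left h, abs_of_nonpos (by linarith), abs_of_nonpos (by linarith)]
    linarith

lemma posLog_norm_eval_cyclotomic_le {m : ℕ} (hm : 0 < m) {z : ℂ} (hz : ‖z‖ < 1 + (m : ℝ)⁻¹) :
    log⁺ ‖(cyclotomic m ℂ).eval z‖ ≤ 2 ^ m.primeFactors.card * log (π * m) := by
  -- For `m = 1` the estimate on the circle `‖w‖ = 2` is too weak, but `‖z - 1‖ < 3 < π`.
  obtain rfl | hm2 : m = 1 ∨ 2 ≤ m := by omega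
  · simp only [cyclotomic_one, eval_sub, eval_X, eval_one, Nat.primeFactors_one,
      Finset.card_empty, pow_zero, one_mul, Nat.cast_one, mul_one]
    have hz1 : ‖z - 1‖ ≤ π := by
      norm_num at hz
      linarith [norm_sub_le z 1, norm_one (α := ℂ), Real.pi_gt_three]
    calc log⁺ ‖z - 1‖ ≤ log⁺ π := Real.posLog_le_posLog (norm_nonneg _) hz1
      _ = log π := Real.posLog_eq_log (by rw [abs_of_pos Real.pi_pos]; linarith [Real.pi_gt_three])
  · set B := (2 : ℝ) ^ m.primeFactors.card * log (π * m)
    have hk : (2 : ℝ) ≤ 2 ^ m.primeFactors.card :=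
      le_self_pow₀ one_le_two (Finset.card_pos.mpr (Nat.nonempty_primeFactors.mpr hm2)).ne'
    have hsphere : ∀ w : ℂ, ‖w‖ = 1 + (m : ℝ)⁻¹ → ‖(cyclotomic m ℂ).eval w‖ ≤ exp B := by
      intro w hw
      have hw1 : 1 < ‖w‖ := hw ▸ lt_add_of_pos_right 1 (inv_pos.mpr (by exact_mod_cast hm))
      have hΦ := (abs_le.mp (abs_log_norm_eval_cyclotomic_sub_le_of_one_add_inv_le hm hw.ge)).2
      rw [hw] at hΦ
      have hne : (cyclotomic m ℂ).eval w ≠ 0 :=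
        eval_cyclotomic_ne_zero_of_not_isOfFinOrder (not_isOfFinOrder_of_one_lt_norm hw1) hm
      rw [← Real.log_le_iff_le_exp (norm_pos_iff.mpr hne)]
      linarith [totient_mul_log_one_add_inv_le_one m, one_add_mul_log_add_one_le hm2 hk]
    have hB : 0 ≤ B := mul_nonneg (by positivity) (zero_le_one.trans (one_le_log_pi_mul hm))
    calc log⁺ ‖(cyclotomic m ℂ).eval z‖ ≤ log⁺ (exp B) := Real.posLog_le_posLog (norm_nonneg _)
          (Complex.norm_le_of_forall_mem_sphere_norm_le (Polynomial.differentiable _) hsphere hz)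
      _ = B := by
          rw [Real.posLog_eq_log (by rw [abs_of_pos (exp_pos B)]; exact one_le_exp hB), log_exp]

/-- For every positive integer `m` and every complex `z`,
`|log⁺|Φ_m(z)| - φ(m)·log⁺|z|| ≤ 2 ^ ω(m) · log (π m)`, where `log⁺ t = max (log t) 0`. -/
theorem cyclotomic_logplus_approx (m : ℕ) (hm : 0 < m) (z : ℂ) :
    |max (Real.log ‖(Polynomial.cyclotomic m ℂ).eval z‖) 0 -
        (Nat.totient m : ℝ) * max (Real.log ‖z‖) 0| ≤
      (2 ^ m.primeFactors.card : ℝ) * Real.log (Real.pi * m) := by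
  rw [max_comm, ← Real.posLog_apply, max_comm, ← Real.posLog_apply]
  rcases le_or_gt (1 + (m : ℝ)⁻¹) ‖z‖ with hz | hz
  · have hz1 : 1 ≤ ‖z‖ := le_trans (by simp) hz
    rw [Real.posLog_eq_log (x := ‖z‖) (by rwa [abs_norm])]
    calc _ ≤ |log ‖(cyclotomic m ℂ).eval z‖ - m.totient * log ‖z‖| :=
          abs_posLog_sub_le_abs_log_sub _ (mul_nonneg (Nat.cast_nonneg _) (Real.log_nonneg hz1))
      _ ≤ 2 ^ m.primeFactors.card * log (m + 1) :=
          abs_log_norm_eval_cyclotomic_sub_le_of_one_add_inv_le hm hz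
      _ ≤ 2 ^ m.primeFactors.card * log (π * m) :=
          mul_le_mul_of_nonneg_left (log_add_one_le_log_pi_mul hm) (by positivity)
  · have hΦ := posLog_norm_eval_cyclotomic_le hm hz
    have hφ : m.totient * log⁺ ‖z‖ ≤ 1 := by
      refine le_trans ?_ (totient_mul_log_one_add_inv_le_one m)
      rw [Real.posLog_eq_log_max_one (norm_nonneg z)]
      gcongr
      exact max_le (by simp) hz.le
    have h1 : 1 ≤ (2 : ℝ) ^ m.primeFactors.card * log (π * m) :=
      one_le_mul_of_one_le_of_one_le (one_le_pow₀ one_le_two) (one_le_log_pi_mul hm)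
    rw [abs_sub_le_iff]
    have hφ0 : 0 ≤ m.totient * log⁺ ‖z‖ := mul_nonneg (Nat.cast_nonneg _) Real.posLog_nonneg
    constructor <;> linarith [Real.posLog_nonneg (x := ‖(cyclotomic m ℂ).eval z‖)]
end

section
/- Let K be a number field, p a prime number, 𝔭 a prime of K above p with ramification index e = v_𝔭(p), and ξ ∈ K with v_𝔭(ξ - 1) > e/(p-1). Then for every positive integer n, v_𝔭(ξ^n - 1) = v_𝔭(ξ - 1) + v_𝔭(n). -/
open NumberField IsDedekindDomain
open scoped Classical

/-- The additive `𝔭`-adic valuation of a nonzero element of a number field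
(junk value `0` at `x = 0`). -/
noncomputable def addVal (K : Type*) [Field K] [NumberField K]
    (v : HeightOneSpectrum (𝓞 K)) (x : K) : ℤ :=
  if hx : x = 0 then 0
  else -Multiplicative.toAdd (WithZero.unzero ((v.valuation K).ne_zero_iff.mpr hx))

/-- The normalized `𝔭`-adic absolute value `|x|_𝔭 = N(𝔭) ^ (-v_𝔭(x))`. -/
noncomputable def finAbs (K : Type*) [Field K] [NumberField K]
    (v : HeightOneSpectrum (𝓞 K)) (x : K) : ℝ :=
  if x = 0 then 0 else (Ideal.absNorm v.asIdeal : ℝ) ^ (-(addVal K v x))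

/-- The projective absolute logarithmic Weil height of a (nonzero) vector of
elements of a number field `K`:
`h(α) = d⁻¹ (∑_{w ∣ ∞} d_w log max_i |α_i|_w + ∑_𝔭 log max_i |α_i|_𝔭)`. -/
noncomputable def projHeight (K : Type*) [Field K] [NumberField K]
    {ι : Type*} [Fintype ι] [Nonempty ι] (α : ι → K) : ℝ :=
  (Module.finrank ℚ K : ℝ)⁻¹ *
    ((∑ w : InfinitePlace K, (w.mult : ℝ) *
        Real.log (Finset.univ.sup' Finset.univ_nonempty (fun i => w (α i)))) +
     ∑ᶠ v : HeightOneSpectrum (𝓞 K),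
        Real.log (Finset.univ.sup' Finset.univ_nonempty (fun i => finAbs K v (α i))))

/-- The absolute logarithmic Weil height of an algebraic number `x`, `h(x) = h(1 : x)`. -/
noncomputable def heightK (K : Type*) [Field K] [NumberField K] (x : K) : ℝ :=
  projHeight K ![1, x]

/-- `h(1, f)`: the projective height of the vector made of `1` together with the
coefficients of `f` (in degrees `0, …, D`). -/
noncomputable def polyHeight1 (K : Type*) [Field K] [NumberField K]
    (D : ℕ) (f : Polynomial K) : ℝ :=
  projHeight K (fun i : Fin (D + 2) => if i.val = 0 then 1 else f.coeff (i.val - 1))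

/-!
Write `ξ = 1 + π`. For a prime `q ≠ p`, `q` is a unit at `𝔭`, and in
`ξ ^ q - 1 = (ξ - 1) (1 + ξ + ⋯ + ξ ^ (q - 1))` the second factor is `≡ q` modulo `π`, hence a
unit, so `v(ξ ^ q - 1) = v(ξ - 1)`. For `q = p`, the condition `(p - 1) v(π) > v(p)` makes `pπ`
the dominant term of `(1 + π) ^ p - 1 = pπ + ∑_{k ≥ 2} C(p, k) π ^ k`, because `p ∣ C(p, k)` for
`k < p`; so `v(ξ ^ p - 1) = v(ξ - 1) + v(p)`. Both steps preserve the condition on `ξ`, and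
induction over the prime factorisation of `n` gives, in multiplicative notation,
`|ξ ^ n - 1| = |ξ - 1| · |n|`; this holds for any valuation on a commutative ring.
-/

namespace Valuation

variable {R Γ₀ : Type*} [CommRing R] [LinearOrderedCommGroupWithZero Γ₀] (v : Valuation R Γ₀)

theorem map_natCast_le_one (n : ℕ) : v n ≤ 1 := natCast_mem v.integer n

theorem map_intCast_le_one (n : ℤ) : v n ≤ 1 := intCast_mem v.integer n

theorem map_natCast_eq_one_of_ne {p q : ℕ} (hp : p.Prime) (hq : q.Prime) (hqp : q ≠ p)
    (hvp : v p < 1) : v q = 1 := by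
  refine (v.map_natCast_le_one q).antisymm (not_lt.mp fun hvq => ?_)
  obtain ⟨a, b, hab⟩ := Nat.isCoprime_iff_coprime.mpr ((Nat.coprime_primes hp hq).mpr hqp.symm)
  have hab' : (a : R) * p + (b : R) * q = 1 := by
    exact_mod_cast congrArg (Int.cast : ℤ → R) hab
  have hle := v.map_add (a * p) (b * q)
  rw [hab', v.map_one, v.map_mul, v.map_mul] at hle
  refine hle.not_gt (max_lt ?_ ?_)
  · exact (mul_le_of_le_one_left zero_le (v.map_intCast_le_one a)).trans_lt hvp
  · exact (mul_le_of_le_one_left zero_le (v.map_intCast_le_one b)).trans_lt hvq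

variable {v}

theorem map_eq_one_of_map_sub_one_lt_one {ξ : R} (hξ : v (ξ - 1) < 1) : v ξ = 1 := by
  simpa using v.map_one_add_of_lt hξ

theorem map_geom_sum_le_one {ξ : R} (hξ : v ξ ≤ 1) (m : ℕ) :
    v (∑ i ∈ Finset.range m, ξ ^ i) ≤ 1 :=
  v.map_sum_le fun i _ => by rw [map_pow]; exact pow_le_one₀ zero_le hξ

theorem map_pow_sub_one_le {ξ : R} (hξ : v ξ ≤ 1) (m : ℕ) : v (ξ ^ m - 1) ≤ v (ξ - 1) := by
  rw [← geom_sum_mul, v.map_mul]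
  exact mul_le_of_le_one_left zero_le (map_geom_sum_le_one hξ m)

theorem map_geom_sum_eq_one {ξ : R} (hξ : v (ξ - 1) < 1) {m : ℕ} (hm : v m = 1) :
    v (∑ i ∈ Finset.range m, ξ ^ i) = 1 := by
  have hξ1 : v ξ = 1 := map_eq_one_of_map_sub_one_lt_one hξ
  have hsum : ∑ i ∈ Finset.range m, ξ ^ i = m + ∑ i ∈ Finset.range m, (ξ ^ i - 1) := by
    simp [Finset.sum_sub_distrib]
  have htail : v (∑ i ∈ Finset.range m, (ξ ^ i - 1)) < v m := by
    rw [hm]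
    exact v.map_sum_lt one_ne_zero fun i _ => (map_pow_sub_one_le hξ1.le i).trans_lt hξ
  rw [hsum, v.map_add_eq_of_lt_left htail, hm]

theorem map_pow_sub_one_of_map_natCast_eq_one {ξ : R} (hξ : v (ξ - 1) < 1) {m : ℕ}
    (hm : v m = 1) : v (ξ ^ m - 1) = v (ξ - 1) := by
  rw [← geom_sum_mul, v.map_mul, map_geom_sum_eq_one hξ hm, one_mul]

theorem map_lt_one_of_pow_pred_lt {p : ℕ} (hp : p.Prime) {π : R} (hπ : v π ^ (p - 1) < v p) :
    v π < 1 :=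
  (pow_lt_one_iff_of_nonneg zero_le (by have := hp.two_le; omega)).mp
    (hπ.trans_le (v.map_natCast_le_one p))

/-- Bounds the terms of degree `k ≥ 2` in the binomial expansion of `(1 + π) ^ p`. -/
theorem map_pow_mul_choose_lt {p : ℕ} (hp : p.Prime) {π : R} (hπ0 : v π ≠ 0)
    (hπ : v π ^ (p - 1) < v p) {k : ℕ} (hk2 : 2 ≤ k) (hkp : k ≤ p) :
    v (π ^ k * p.choose k) < v π * v p := by
  have hπpos : 0 < v π := pos_iff_ne_zero.mpr hπ0
  have hπk : v π ^ k < v π := pow_lt_self_of_lt_one₀ hπpos (map_lt_one_of_pow_pred_lt hp hπ) hk2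
  rcases hkp.eq_or_lt with rfl | hkp
  · calc v (π ^ k * k.choose k) = v π * v π ^ (k - 1) := by
          rw [Nat.choose_self, Nat.cast_one, mul_one, map_pow, ← pow_succ',
            Nat.sub_add_cancel (by omega)]
      _ < v π * v k := mul_lt_mul_of_pos_left hπ hπpos
  · obtain ⟨m, hm⟩ := hp.dvd_choose_self (by omega) hkp
    calc v (π ^ k * p.choose k) = v π ^ k * v p * v m := by
          rw [hm, Nat.cast_mul, v.map_mul, v.map_mul, map_pow, mul_assoc]
      _ ≤ v π ^ k * v p := mul_le_of_le_one_right zero_le (v.map_natCast_le_one m)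
      _ < v π * v p := mul_lt_mul_of_pos_right hπk (zero_le.trans_lt hπ)

theorem map_pow_prime_sub_one {p : ℕ} (hp : p.Prime) {ξ : R} (hξ : v (ξ - 1) ^ (p - 1) < v p) :
    v (ξ ^ p - 1) = v (ξ - 1) * v p := by
  obtain ⟨π, rfl⟩ : ∃ π, ξ = π + 1 := ⟨ξ - 1, by ring⟩
  rw [add_sub_cancel_right] at hξ ⊢
  rcases eq_or_ne (v π) 0 with hπ0 | hπ0
  · have hξ1 : v (π + 1) ≤ 1 := (map_eq_one_of_map_sub_one_lt_one (by simp [hπ0])).le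
    simpa [hπ0] using map_pow_sub_one_le hξ1 p
  have hexp : (π + 1) ^ p - 1 = π * p + ∑ k ∈ Finset.Ico 2 (p + 1), π ^ k * p.choose k := by
    rw [add_pow, Finset.range_eq_Ico, Finset.sum_eq_sum_Ico_succ_bot (by omega),
      Finset.sum_eq_sum_Ico_succ_bot (by have := hp.two_le; omega)]
    simp only [one_pow, mul_one, pow_zero, zero_add, pow_one, Nat.choose_zero_right,
      Nat.choose_one_right, Nat.cast_one]
    ring
  have htail : v (∑ k ∈ Finset.Ico 2 (p + 1), π ^ k * p.choose k) < v (π * p) := by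
    rw [v.map_mul]
    refine v.map_sum_lt (mul_ne_zero hπ0 (zero_le.trans_lt hξ).ne') fun k hk => ?_
    rw [Finset.mem_Ico] at hk
    exact map_pow_mul_choose_lt hp hπ0 hξ hk.1 (by omega)
  rw [hexp, v.map_add_eq_of_lt_left htail, v.map_mul]

theorem map_pow_sub_one_eq_mul {p : ℕ} (hp : p.Prime) (hvp : v p < 1) {ξ : R}
    (hξ : v (ξ - 1) ^ (p - 1) < v p) (n : ℕ) : v (ξ ^ n - 1) = v (ξ - 1) * v n := by
  induction n using Nat.recOnMul generalizing ξ with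
  | zero => simp
  | one => simp
  | prime q hq =>
    rcases eq_or_ne q p with rfl | hqp
    · exact map_pow_prime_sub_one hq hξ
    · have hvq := v.map_natCast_eq_one_of_ne hp hq hqp hvp
      rw [hvq, mul_one]
      exact map_pow_sub_one_of_map_natCast_eq_one (map_lt_one_of_pow_pred_lt hp hξ) hvq
  | mul a b iha ihb =>
    have hξa : v (ξ ^ a - 1) ^ (p - 1) < v p := by
      rw [iha hξ, mul_pow]
      exact (mul_le_of_le_one_right zero_le
        (pow_le_one₀ zero_le (v.map_natCast_le_one a))).trans_lt hξ
    rw [pow_mul, ihb hξa, iha hξ, Nat.cast_mul, v.map_mul, mul_assoc]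

end Valuation

open WithZero

theorem addVal_eq_neg_log (K : Type*) [Field K] [NumberField K] (v : HeightOneSpectrum (𝓞 K))
    (x : K) : addVal K v x = -log (v.valuation K x) := by
  unfold addVal
  split_ifs with hx
  · simp [hx]
  · rw [toAdd_unzero_eq_log]

/-- If `𝔭` lies above `p` with ramification index `e = v_𝔭(p)` and
`v_𝔭(ξ - 1) > e/(p-1)`, then `v_𝔭(ξ^n - 1) = v_𝔭(ξ - 1) + v_𝔭(n)` for all `n ≥ 1`. -/
theorem addVal_pow_sub_one (K : Type*) [Field K] [NumberField K]
    (p : ℕ) (hp : p.Prime) (v : HeightOneSpectrum (𝓞 K))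
    (hpv : (p : 𝓞 K) ∈ v.asIdeal)
    (e : ℤ) (he : e = addVal K v (p : K))
    (ξ : K) (hξ : ((p : ℤ) - 1) * addVal K v (ξ - 1) > e)
    (n : ℕ) (hn : 0 < n) :
    addVal K v (ξ ^ n - 1) = addVal K v (ξ - 1) + addVal K v (n : K) := by
  have hvp : v.valuation K p < 1 := by
    simpa using (v.valuation_lt_one_iff_mem (p : 𝓞 K)).mpr hpv
  have hvp0 : v.valuation K p ≠ 0 := by simp [hp.ne_zero]
  have he0 : 0 < e := by
    rwa [he, addVal_eq_neg_log, neg_pos, ← log_one, log_lt_log hvp0 one_ne_zero]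
  have hξ0 : v.valuation K (ξ - 1) ≠ 0 := by
    intro h
    rw [addVal_eq_neg_log, h, log_zero] at hξ
    omega
  have hξ' : v.valuation K (ξ - 1) ^ (p - 1) < v.valuation K p := by
    rw [← log_lt_log (pow_ne_zero _ hξ0) hvp0, log_pow, nsmul_eq_mul, Nat.cast_sub hp.one_le]
    rw [he, addVal_eq_neg_log, addVal_eq_neg_log] at hξ
    push_cast
    linarith
  rw [addVal_eq_neg_log, Valuation.map_pow_sub_one_eq_mul hp hvp hξ' n,
    log_mul hξ0 (by simp [hn.ne']), neg_add, addVal_eq_neg_log, addVal_eq_neg_log]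
end

section
/- Let f₁, f₂ ∈ ℂ[x] have degrees at most D and all coefficients bounded in absolute value by H ≥ 1. Let ξ ∈ ℂ satisfy |ξ| ≤ 1, f₁(ξ) = 0, and f₂(ξ) = δ ≠ 0. Set ε = min(|δ|, 1)/(3D²H). Then for every z ∈ ℂ with |z - ξ| ≤ ε, one has |f₁(z)| ≤ (1/2)|f₂(z)|. -/
/-!
On the disc of radius `1 + ε` the derivative of a polynomial of degree at most `D` with
coefficients bounded by `H` is at most `H · D(D+1)/2 · (1 + ε)^(D-1) ≤ H D²` (Bernoulli's
inequality controls the power once `2Dε ≤ 1`). By the mean value inequality both `f₁` and `f₂`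
move by at most `H D² ε = min(|δ|, 1)/3` on the `ε`-disc around `ξ`, so there
`|f₁(z)| ≤ min(|δ|, 1)/3` while `|f₂(z)| ≥ |δ| - min(|δ|, 1)/3 ≥ 2 min(|δ|, 1)/3`.
-/

open Finset Polynomial

lemma one_add_pow_mul_one_sub_mul_le_one {ε : ℝ} (hε₀ : 0 ≤ ε) (hε₁ : ε ≤ 1) (n : ℕ) :
    (1 + ε) ^ n * (1 - n * ε) ≤ 1 := by
  have bernoulli : 1 - n * ε ≤ (1 - ε) ^ n := by
    simpa [sub_eq_add_neg] using one_add_mul_le_pow (a := -ε) (by linarith) n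
  calc (1 + ε) ^ n * (1 - n * ε) ≤ (1 + ε) ^ n * (1 - ε) ^ n := by gcongr
    _ = (1 - ε ^ 2) ^ n := by rw [← mul_pow]; ring
    _ ≤ 1 := pow_le_one₀ (by nlinarith) (by nlinarith)

lemma mul_succ_div_two_mul_one_add_pow_le_sq {D : ℕ} {ε : ℝ} (hε₀ : 0 ≤ ε)
    (hε : 2 * D * ε ≤ 1) : D * (D + 1) / 2 * (1 + ε) ^ (D - 1) ≤ (D : ℝ) ^ 2 := by
  rcases D with _ | n
  · simp
  push_cast at hε ⊢
  have hpow := one_add_pow_mul_one_sub_mul_le_one hε₀ (by nlinarith) n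
  have hlin : (n : ℝ) + 2 ≤ 2 * (n + 1) * (1 - n * ε) := by nlinarith
  nlinarith [mul_le_mul_of_nonneg_left hlin (by positivity : (0 : ℝ) ≤ (1 + ε) ^ n)]

lemma natCast_sum_range_succ_id (D : ℕ) : ∑ i ∈ range (D + 1), (i : ℝ) = D * (D + 1) / 2 := by
  have h := congrArg (Nat.cast (R := ℝ)) (sum_range_id_mul_two (D + 1))
  push_cast at h
  linarith

lemma norm_derivative_eval_le {R : Type*} [NormedCommRing R] [NormOneClass R] {p : R[X]} {D : ℕ}
    (hp : p.natDegree ≤ D) {H : ℝ} (hcoeff : ∀ i, ‖p.coeff i‖ ≤ H) {r : ℝ} (hr : 1 ≤ r) {w : R}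
    (hw : ‖w‖ ≤ r) : ‖p.derivative.eval w‖ ≤ H * (D * (D + 1) / 2) * r ^ (D - 1) := by
  have hH : 0 ≤ H := (norm_nonneg _).trans (hcoeff 0)
  rw [derivative_eval, p.sum_over_range' (by simp) (D + 1) (Nat.lt_succ_of_le hp),
    ← natCast_sum_range_succ_id, mul_sum, sum_mul]
  refine (norm_sum_le _ _).trans (sum_le_sum fun i hi => ?_)
  rw [mem_range] at hi
  have hcast : ‖(i : R)‖ ≤ i := by simpa using Nat.norm_cast_le (α := R) i
  have hpow : ‖w‖ ^ (i - 1) ≤ r ^ (D - 1) :=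
    (pow_le_pow_left₀ (norm_nonneg w) hw _).trans (pow_le_pow_right₀ hr (by omega))
  calc ‖p.coeff i * i * w ^ (i - 1)‖ ≤ ‖p.coeff i‖ * ‖(i : R)‖ * ‖w‖ ^ (i - 1) := by
        grw [norm_mul_le, norm_mul_le, norm_pow_le]
    _ ≤ H * i * r ^ (D - 1) :=
        mul_le_mul (mul_le_mul (hcoeff i) hcast (norm_nonneg _) hH) hpow (by positivity)
          (mul_nonneg hH i.cast_nonneg)

lemma norm_eval_sub_eval_le {𝕜 : Type*} [RCLike 𝕜] {p : 𝕜[X]} {D : ℕ} (hp : p.natDegree ≤ D)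
    {H : ℝ} (hcoeff : ∀ i, ‖p.coeff i‖ ≤ H) {ξ z : 𝕜} (hξ : ‖ξ‖ ≤ 1) {ε : ℝ} (hz : ‖z - ξ‖ ≤ ε)
    (hε : 2 * D * ε ≤ 1) : ‖p.eval z - p.eval ξ‖ ≤ H * D ^ 2 * ε := by
  have hε₀ : 0 ≤ ε := (norm_nonneg _).trans hz
  have hH : 0 ≤ H := (norm_nonneg _).trans (hcoeff 0)
  have hderiv : ∀ w ∈ Metric.closedBall ξ ε, ‖deriv (fun x => p.eval x) w‖ ≤ H * D ^ 2 := by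
    intro w hw
    rw [Metric.mem_closedBall, dist_eq_norm] at hw
    have hw' : ‖w‖ ≤ 1 + ε := by linarith [norm_le_insert' w ξ]
    rw [Polynomial.deriv]
    calc _ ≤ H * (D * (D + 1) / 2) * (1 + ε) ^ (D - 1) :=
          norm_derivative_eval_le hp hcoeff (by linarith) hw'
      _ ≤ H * D ^ 2 := by
          rw [mul_assoc]
          exact mul_le_mul_of_nonneg_left (mul_succ_div_two_mul_one_add_pow_le_sq hε₀ hε) hH
  calc ‖p.eval z - p.eval ξ‖ ≤ H * D ^ 2 * ‖z - ξ‖ :=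
        (convex_closedBall ξ ε).norm_image_sub_le_of_norm_deriv_le
          (fun w _ => p.differentiableAt) hderiv (Metric.mem_closedBall_self hε₀)
          (by rwa [Metric.mem_closedBall, dist_eq_norm])
    _ ≤ H * D ^ 2 * ε := by gcongr

theorem abs_eval_le_half_general (f₁ f₂ : Polynomial ℂ) (D : ℕ) (hD : 1 ≤ D)
    (hdeg₁ : f₁.natDegree ≤ D) (hdeg₂ : f₂.natDegree ≤ D)
    (H : ℝ) (hH : 1 ≤ H)
    (hcoeff₁ : ∀ i, ‖f₁.coeff i‖ ≤ H)
    (hcoeff₂ : ∀ i, ‖f₂.coeff i‖ ≤ H)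
    (ξ δ : ℂ) (hξ : ‖ξ‖ ≤ 1) (h₁ : f₁.eval ξ = 0)
    (h₂ : f₂.eval ξ = δ)
    (ε : ℝ) (hε : ε = min (‖δ‖) 1 / (3 * D ^ 2 * H))
    (z : ℂ) (hz : ‖z - ξ‖ ≤ ε) :
    ‖f₁.eval z‖ ≤ (1 / 2) * ‖f₂.eval z‖ := by
  set m := min ‖δ‖ 1
  have hD' : (1 : ℝ) ≤ D := by exact_mod_cast hD
  have hHDε : H * D ^ 2 * ε = m / 3 := by
    rw [hε]
    field_simp
  have hεD : 2 * D * ε ≤ 1 := by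
    have hε₀ : 0 ≤ ε := (norm_nonneg _).trans hz
    have hDH : 1 ≤ D * H := by nlinarith
    nlinarith [min_le_right ‖δ‖ 1,
      mul_nonneg (mul_nonneg hε₀ (by linarith : (0 : ℝ) ≤ D)) (sub_nonneg.2 hDH)]
  have hf₁ : ‖f₁.eval z‖ ≤ m / 3 := by
    simpa [h₁, hHDε] using norm_eval_sub_eval_le hdeg₁ hcoeff₁ hξ hz hεD
  have hf₂ : ‖f₂.eval z - δ‖ ≤ m / 3 := by
    simpa [h₂, hHDε] using norm_eval_sub_eval_le hdeg₂ hcoeff₂ hξ hz hεD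
  linarith [norm_le_insert' δ (f₂.eval z), norm_sub_rev δ (f₂.eval z), min_le_left ‖δ‖ 1]

/-- Let `f₁, f₂ ∈ ℂ[x]` have degrees at most `D ≥ 1` and coefficients bounded by
`H ≥ 1`, let `|ξ| ≤ 1` with `f₁(ξ) = 0` and `f₂(ξ) = δ ≠ 0`, and set
`ε = min(|δ|,1)/(3D²H)`. Then `|z - ξ| ≤ ε` implies `|f₁(z)| ≤ (1/2)|f₂(z)|`. -/
theorem abs_eval_le_half (f₁ f₂ : Polynomial ℂ) (D : ℕ) (hD : 1 ≤ D)
    (hdeg₁ : f₁.natDegree ≤ D) (hdeg₂ : f₂.natDegree ≤ D)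
    (H : ℝ) (hH : 1 ≤ H)
    (hcoeff₁ : ∀ i, ‖f₁.coeff i‖ ≤ H)
    (hcoeff₂ : ∀ i, ‖f₂.coeff i‖ ≤ H)
    (ξ δ : ℂ) (hξ : ‖ξ‖ ≤ 1) (h₁ : f₁.eval ξ = 0)
    (h₂ : f₂.eval ξ = δ) (hδ : δ ≠ 0)
    (ε : ℝ) (hε : ε = min (‖δ‖) 1 / (3 * D ^ 2 * H))
    (z : ℂ) (hz : ‖z - ξ‖ ≤ ε) :
    ‖f₁.eval z‖ ≤ (1 / 2) * ‖f₂.eval z‖ :=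
  abs_eval_le_half_general f₁ f₂ D hD hdeg₁ hdeg₂ H hH hcoeff₁ hcoeff₂ ξ δ hξ h₁ h₂ ε hε z hz
end
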